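/- arXiv:2503.02005 — 7 statements merged into one kernel-verified Lean document; each statement's English description precedes it below -/
import Mathlib

section
/- For every k ≥ 1, the polynomial Q_k(x) = ∑_{i=0}^{k} (-1)^i * binomial(k+i-1, 2i) * x^{2i} satisfies Q_k(x) = U_{k-1}(1 − x²/2) − U_{k-2}(1 − x²/2), where U denotes the Chebyshev polynomial of the second kind (with the convention U_{-1} = 0). -/
open Polynomial Polynomial.Chebyshev Finset

private lemma choose_rec (n j : ℕ) :
    (n + 2).choose (2 * j + 2) + n.choose (2 * j + 2) =
      2 * (n + 1).choose (2 * j + 2) + n.choose (2 * j) := by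
  have h1 : (n + 2).choose (2 * j + 2) =
      (n + 1).choose (2 * j + 1) + (n + 1).choose (2 * j + 2) :=
    Nat.choose_succ_succ _ _
  have h2 : (n + 1).choose (2 * j + 1) = n.choose (2 * j) + n.choose (2 * j + 1) :=
    Nat.choose_succ_succ _ _
  have h3 : (n + 1).choose (2 * j + 2) = n.choose (2 * j + 1) + n.choose (2 * j + 2) :=
    Nat.choose_succ_succ _ _
  omega

private noncomputable def Qs (k : ℕ) (N : ℕ) : ℝ[X] :=
  ∑ i ∈ Finset.range N, Polynomial.C ((-1 : ℝ) ^ i * ((k + i - 1).choose (2 * i))) * X ^ (2 * i)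

private lemma Qs_ext (k N : ℕ) (h : k + 1 ≤ N) : Qs k (k + 1) = Qs k N := by
  unfold Qs
  apply Finset.sum_subset
  · exact Finset.range_subset_range.2 h
  · intro i _ hi
    have hi' : k + 1 ≤ i := by simpa using hi
    have : (k + i - 1).choose (2 * i) = 0 := Nat.choose_eq_zero_of_lt (by omega)
    simp [this]

private lemma Qs_rec (k : ℕ) :
    Qs (k + 2) (k + 3) = (2 - X ^ 2) * Qs (k + 1) (k + 3) - Qs k (k + 3) := by
  have hshift : (X : ℝ[X]) ^ 2 * Qs (k + 1) (k + 3) =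
      ∑ i ∈ Finset.range (k + 3),
        (if i = 0 then 0 else
          Polynomial.C ((-1 : ℝ) ^ (i - 1) * ((k + 1 + (i - 1) - 1).choose (2 * (i - 1)))) *
            X ^ (2 * i)) := by
    rw [← Qs_ext (k + 1) (k + 3) (by omega)]
    rw [Finset.sum_range_succ' _ (k + 2)]
    simp only [Nat.succ_ne_zero, if_false, if_true, Nat.add_sub_cancel, add_zero]
    unfold Qs
    rw [Finset.mul_sum]
    congr 1
    ext i
    ring
  rw [sub_mul, hshift]
  unfold Qs
  rw [Finset.mul_sum, ← Finset.sum_sub_distrib, ← Finset.sum_sub_distrib]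
  apply Finset.sum_congr rfl
  intro i _
  rcases i with _ | j
  · norm_num
  · simp only [Nat.succ_ne_zero, if_false, Nat.add_sub_cancel]
    have hnat := choose_rec (k + j) j
    have hr : ((k + j + 2).choose (2 * j + 2) : ℝ) + (k + j).choose (2 * j + 2) =
        2 * (k + j + 1).choose (2 * j + 2) + (k + j).choose (2 * j) := by
      exact_mod_cast hnat
    have e1 : k + 2 + (j + 1) - 1 = k + j + 2 := by omega
    have e2 : k + 1 + (j + 1) - 1 = k + j + 1 := by omega
    have e3 : k + (j + 1) - 1 = k + j := by omega
    have e4 : k + 1 + j - 1 = k + j := by omega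
    have e5 : 2 * (j + 1) = 2 * j + 2 := by omega
    rw [e1, e2, e3, e4, e5]
    have hC : ((-1 : ℝ) ^ (j + 1) * ((k + j + 2).choose (2 * j + 2))) =
        2 * ((-1 : ℝ) ^ (j + 1) * ((k + j + 1).choose (2 * j + 2)))
          - (-1 : ℝ) ^ j * ((k + j).choose (2 * j))
          - (-1 : ℝ) ^ (j + 1) * ((k + j).choose (2 * j + 2)) := by
      rcases Nat.even_or_odd j with hj | hj
      · rw [(Even.add_one hj).neg_one_pow, hj.neg_one_pow]
        linarith
      · rw [(Odd.add_one hj).neg_one_pow, hj.neg_one_pow]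
        linarith
    calc Polynomial.C ((-1 : ℝ) ^ (j + 1) * ((k + j + 2).choose (2 * j + 2))) * X ^ (2 * j + 2)
        = (2 * (Polynomial.C ((-1 : ℝ) ^ (j + 1) * ((k + j + 1).choose (2 * j + 2))))
          - Polynomial.C ((-1 : ℝ) ^ j * ((k + j).choose (2 * j)))
          - Polynomial.C ((-1 : ℝ) ^ (j + 1) * ((k + j).choose (2 * j + 2)))) * X ^ (2 * j + 2) := by
          rw [hC]
          simp only [Polynomial.C_sub, Polynomial.C_mul, Polynomial.C_add, Polynomial.C_neg,
            map_ofNat]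
      _ = _ := by ring

theorem Q_eq_chebyshev (k : ℕ) (hk : 1 ≤ k) :
    ∑ i ∈ Finset.range (k + 1),
        Polynomial.C ((-1 : ℝ) ^ i * ((k + i - 1).choose (2 * i))) * X ^ (2 * i) =
      (Chebyshev.U ℝ ((k : ℤ) - 1)).comp (1 - Polynomial.C (2⁻¹ : ℝ) * X ^ 2) -
        (Chebyshev.U ℝ ((k : ℤ) - 2)).comp (1 - Polynomial.C (2⁻¹ : ℝ) * X ^ 2) := by
  set y : ℝ[X] := 1 - Polynomial.C (2⁻¹ : ℝ) * X ^ 2 with hy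
  have h2 : (2 : ℝ[X]) * Polynomial.C (2⁻¹ : ℝ) = 1 := by
    rw [show (2 : ℝ[X]) = Polynomial.C (2 : ℝ) from (map_ofNat Polynomial.C 2).symm,
      ← Polynomial.C_mul]
    norm_num
  have hy2 : 2 * y = 2 - X ^ 2 := by
    rw [hy, mul_sub, mul_one, ← mul_assoc, h2, one_mul]
  have key : ∀ n : ℕ,
      (Qs (n + 1) (n + 2) =
        (Chebyshev.U ℝ (((n + 1 : ℕ) : ℤ) - 1)).comp y -
          (Chebyshev.U ℝ (((n + 1 : ℕ) : ℤ) - 2)).comp y) ∧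
      (Qs (n + 2) (n + 3) =
        (Chebyshev.U ℝ (((n + 2 : ℕ) : ℤ) - 1)).comp y -
          (Chebyshev.U ℝ (((n + 2 : ℕ) : ℤ) - 2)).comp y) := by
    intro n
    induction n with
    | zero =>
      constructor
      · have e1 : ((0 + 1 : ℕ) : ℤ) - 1 = 0 := by norm_num
        have e2 : ((0 + 1 : ℕ) : ℤ) - 2 = -1 := by norm_num
        rw [e1, e2, Chebyshev.U_zero, Chebyshev.U_neg_one]
        unfold Qs
        rw [Finset.sum_range_succ, Finset.sum_range_succ, Finset.sum_range_zero]
        simp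
      · have e1 : ((0 + 2 : ℕ) : ℤ) - 1 = 1 := by norm_num
        have e2 : ((0 + 2 : ℕ) : ℤ) - 2 = 0 := by norm_num
        rw [e1, e2, Chebyshev.U_one, Chebyshev.U_zero]
        simp only [Polynomial.mul_comp, Polynomial.ofNat_comp, Polynomial.X_comp,
          Polynomial.one_comp, Nat.cast_ofNat]
        rw [hy2]
        unfold Qs
        rw [Finset.sum_range_succ, Finset.sum_range_succ, Finset.sum_range_succ,
          Finset.sum_range_zero]
        norm_num
        ring
    | succ m ih =>
      obtain ⟨ih1, ih2⟩ := ih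
      refine ⟨ih2, ?_⟩
      have hrec := Qs_rec (m + 1)
      rw [show m + 1 + 2 = m + 3 by ring, show m + 1 + 3 = m + 4 by ring,
        ← Qs_ext (m + 2) (m + 4) (by omega), ← Qs_ext (m + 1) (m + 4) (by omega)] at hrec
      rw [show m + 1 + 2 = m + 3 by ring, hrec, ih1, ih2]
      have hU0 : ∀ z : ℤ, Chebyshev.U ℝ (z + 2) = 2 * X * Chebyshev.U ℝ (z + 1) -
          Chebyshev.U ℝ z := fun z => Chebyshev.U_add_two ℝ z
      have f1 : (((m + 3 : ℕ) : ℤ) - 1) = (((m + 1 : ℕ) : ℤ) - 1) + 2 := by push_cast; ring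
      have f2 : (((m + 2 : ℕ) : ℤ) - 1) = (((m + 1 : ℕ) : ℤ) - 1) + 1 := by push_cast; ring
      have f3 : (((m + 3 : ℕ) : ℤ) - 2) = (((m + 1 : ℕ) : ℤ) - 2) + 2 := by push_cast; ring
      have f4 : (((m + 2 : ℕ) : ℤ) - 2) = (((m + 1 : ℕ) : ℤ) - 2) + 1 := by push_cast; ring
      rw [f1, f3, hU0, hU0, ← f2, ← f4]
      simp only [Polynomial.sub_comp, Polynomial.mul_comp, Polynomial.X_comp,
        Polynomial.ofNat_comp, Nat.cast_ofNat]
      rw [hy2]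
      ring
  obtain ⟨m, rfl⟩ := Nat.exists_eq_add_of_le hk
  have h := (key m).1
  rw [show 1 + m = m + 1 by ring]
  exact h
end

section
/- For every k ≥ 2 and all real x, V_{k-1}(1 − x²/2) = ∏_{i=1}^{k-1} (4 sin²((i − 1/2)π/(2k−1)) − x²), where V_m = U_m − U_{m-1} is the Chebyshev polynomial of the third kind. -/
set_option maxHeartbeats 1000000

open Polynomial Polynomial.Chebyshev Real

lemma twoX_natDegree : ((2 : ℝ[X]) * X).natDegree = 1 := by compute_degree!

lemma twoX_leadingCoeff : ((2 : ℝ[X]) * X).leadingCoeff = 2 := by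
  rw [Polynomial.leadingCoeff, twoX_natDegree]; simp

lemma U_deg_lead (n : ℕ) : (U ℝ (n : ℤ)).natDegree = n ∧ (U ℝ (n : ℤ)).leadingCoeff = 2 ^ n := by
  induction n using Nat.strong_induction_on with
  | _ n ih =>
    match n with
    | 0 => simp [U_zero]
    | 1 =>
      rw [Nat.cast_one, U_one]
      refine ⟨twoX_natDegree, by simpa using twoX_leadingCoeff⟩
    | (n+2) =>
      obtain ⟨h1d, h1l⟩ := ih (n+1) (by omega)
      obtain ⟨h0d, h0l⟩ := ih n (by omega)
      push_cast at h1d h1l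
      have hp : U ℝ ((n:ℤ)+1) ≠ 0 := by
        intro h
        rw [Polynomial.leadingCoeff, h] at h1l
        simp at h1l
        exact (pow_ne_zero (n+1) (two_ne_zero)) h1l.symm
      have h2X : ((2 : ℝ[X]) * X) ≠ 0 := by
        intro h
        have := congrArg (Polynomial.coeff · 1) h
        simp at this
      have hmuld : ((2 : ℝ[X]) * X * U ℝ ((n:ℤ)+1)).natDegree = n + 2 := by
        rw [Polynomial.natDegree_mul h2X hp, twoX_natDegree, h1d]; omega
      have hmull : ((2 : ℝ[X]) * X * U ℝ ((n:ℤ)+1)).leadingCoeff = 2 ^ (n + 2) := by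
        rw [Polynomial.leadingCoeff_mul, twoX_leadingCoeff, h1l]; ring
      have hrec : U ℝ (((n:ℕ)+2 : ℕ) : ℤ) = 2 * X * U ℝ ((n:ℤ)+1) - U ℝ (n:ℤ) := by
        push_cast
        exact U_add_two ℝ n
      have hlt : (U ℝ (n:ℤ)).natDegree < ((2 : ℝ[X]) * X * U ℝ ((n:ℤ)+1)).natDegree := by
        rw [hmuld, h0d]; omega
      have hdeglt : (U ℝ (n:ℤ)).degree < ((2 : ℝ[X]) * X * U ℝ ((n:ℤ)+1)).degree :=
        Polynomial.degree_lt_degree hlt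
      constructor
      · rw [hrec, Polynomial.natDegree_sub_eq_left_of_natDegree_lt hlt, hmuld]
      · rw [hrec, Polynomial.leadingCoeff_sub_of_degree_lt hdeglt, hmull]

theorem V_factorization (k : ℕ) (hk : 2 ≤ k) (x : ℝ) :
    (Chebyshev.U ℝ ((k : ℤ) - 1) - Chebyshev.U ℝ ((k : ℤ) - 2)).eval (1 - x ^ 2 / 2) =
      ∏ i ∈ Finset.Icc 1 (k - 1),
        (4 * Real.sin (((i : ℝ) - 1 / 2) * Real.pi / (2 * (k : ℝ) - 1)) ^ 2 - x ^ 2) := by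
  set m : ℕ := k - 1 with hm
  have hm1 : 1 ≤ m := by omega
  set θ : ℕ → ℝ := fun i => ((i : ℝ) - 1/2) * π / (2 * (k : ℝ) - 1) with hθ
  set a : ℕ → ℝ := fun i => 2 * Real.sin (θ i) with ha
  set V : ℝ[X] := U ℝ ((k:ℤ) - 1) - U ℝ ((k:ℤ) - 2) with hV
  set w : ℝ[X] := 1 - Polynomial.C (2⁻¹ : ℝ) * X ^ 2 with hw
  set P : ℝ[X] := V.comp w with hP
  set Q : ℝ[X] := ∏ i ∈ Finset.Icc 1 m, (Polynomial.C (a i ^ 2) - X ^ 2) with hQ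
  -- casts
  have hc1 : (k:ℤ) - 1 = ((m : ℕ) : ℤ) := by push_cast; omega
  have hc2 : (k:ℤ) - 2 = (((m - 1 : ℕ)) : ℤ) := by push_cast; omega
  have hkR : (2 : ℝ) * (k : ℝ) - 1 > 0 := by
    have : (2:ℝ) ≤ (k:ℝ) := by exact_mod_cast hk
    linarith
  -- θ bounds
  have hθpos : ∀ i ∈ Finset.Icc 1 m, 0 < θ i := by
    intro i hi
    simp only [Finset.mem_Icc] at hi
    have h1 : (1:ℝ) ≤ (i:ℝ) := by exact_mod_cast hi.1
    have : (0:ℝ) < (i:ℝ) - 1/2 := by linarith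
    exact div_pos (mul_pos this pi_pos) hkR
  have hθlt : ∀ i ∈ Finset.Icc 1 m, θ i < π / 2 := by
    intro i hi
    simp only [Finset.mem_Icc] at hi
    have h2 : (i:ℝ) ≤ (m:ℝ) := by exact_mod_cast hi.2
    have hmk : (m:ℝ) = (k:ℝ) - 1 := by
      have : (m:ℕ) + 1 = k := by omega
      have := congrArg (fun t : ℕ => (t : ℝ)) this
      push_cast at this
      linarith
    rw [hθ, div_lt_iff₀ hkR]
    have : ((i:ℝ) - 1/2) < (2 * (k:ℝ) - 1) / 2 := by rw [hmk] at h2; linarith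
    calc ((i:ℝ) - 1/2) * π < ((2 * (k:ℝ) - 1) / 2) * π := by
          apply mul_lt_mul_of_pos_right this pi_pos
      _ = π / 2 * (2 * (k:ℝ) - 1) := by ring
  -- a positive
  have hapos : ∀ i ∈ Finset.Icc 1 m, 0 < a i := by
    intro i hi
    have := Real.sin_pos_of_pos_of_lt_pi (hθpos i hi) (lt_trans (hθlt i hi) (by linarith [pi_pos]))
    simpa [ha] using by linarith
  -- a strictly monotone on Icc
  have hamono : ∀ i ∈ Finset.Icc 1 m, ∀ j ∈ Finset.Icc 1 m, i < j → a i < a j := by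
    intro i hi j hj hij
    have hiR : (i:ℝ) < (j:ℝ) := by exact_mod_cast hij
    have hθij : θ i < θ j := by
      show ((i:ℝ) - 1/2) * π / (2 * (k:ℝ) - 1) < ((j:ℝ) - 1/2) * π / (2 * (k:ℝ) - 1)
      rw [div_lt_div_iff_of_pos_right hkR]
      nlinarith [pi_pos]
    have hmemi : θ i ∈ Set.Icc (-(π/2)) (π/2) :=
      ⟨by linarith [hθpos i hi, pi_pos], le_of_lt (hθlt i hi)⟩
    have hmemj : θ j ∈ Set.Icc (-(π/2)) (π/2) :=
      ⟨by linarith [hθpos j hj, pi_pos], le_of_lt (hθlt j hj)⟩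
    have := Real.strictMonoOn_sin hmemi hmemj hθij
    simpa [ha] using by linarith
  have hainj : Set.InjOn a (Finset.Icc 1 m) := by
    intro i hi j hj hij
    by_contra hne
    rcases lt_or_gt_of_ne hne with h | h
    · exact absurd hij (ne_of_lt (hamono i hi j hj h))
    · exact absurd hij.symm (ne_of_lt (hamono j hj i hi h))
  -- the finset of roots
  set s : Finset ℝ := (Finset.Icc 1 m).image a ∪ (Finset.Icc 1 m).image (fun i => -(a i)) with hs
  have hanegInj : Set.InjOn (fun i => -(a i)) (Finset.Icc 1 m) := by
    intro i hi j hj hij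
    exact hainj hi hj (by simpa using neg_injective hij)
  have hdisj : Disjoint ((Finset.Icc 1 m).image a) ((Finset.Icc 1 m).image (fun i => -(a i))) := by
    rw [Finset.disjoint_left]
    rintro y hy hy'
    simp only [Finset.mem_image] at hy hy'
    obtain ⟨i, hi, rfl⟩ := hy
    obtain ⟨j, hj, hji⟩ := hy'
    have := hapos i hi
    have := hapos j hj
    linarith
  have hcard : s.card = 2 * m := by
    rw [hs, Finset.card_union_of_disjoint hdisj,
      Finset.card_image_of_injOn hainj, Finset.card_image_of_injOn hanegInj]
    simp [Nat.Icc_eq_range']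
    omega
  -- degrees and leading coefficients
  obtain ⟨hUd1, hUl1⟩ := U_deg_lead m
  obtain ⟨hUd0, hUl0⟩ := U_deg_lead (m - 1)
  rw [← hc1] at hUd1 hUl1
  rw [← hc2] at hUd0 hUl0
  have hU1ne : U ℝ ((k:ℤ) - 1) ≠ 0 := by
    intro h
    rw [Polynomial.leadingCoeff, h] at hUl1
    simp at hUl1
    exact (pow_ne_zero m (two_ne_zero)) hUl1.symm
  have hVdlt : (U ℝ ((k:ℤ) - 2)).natDegree < (U ℝ ((k:ℤ) - 1)).natDegree := by
    rw [hUd1, hUd0]; omega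
  have hVd : V.natDegree = m := by
    rw [hV, Polynomial.natDegree_sub_eq_left_of_natDegree_lt hVdlt, hUd1]
  have hVl : V.leadingCoeff = 2 ^ m := by
    rw [hV, Polynomial.leadingCoeff_sub_of_degree_lt (Polynomial.degree_lt_degree hVdlt), hUl1]
  have hVne : V ≠ 0 := by
    intro h
    rw [h] at hVl
    simp at hVl
    exact (pow_ne_zero m (two_ne_zero)) hVl.symm
  have hwd : w.natDegree = 2 := by rw [hw]; compute_degree!
  have hwl : w.leadingCoeff = -(2⁻¹ : ℝ) := by
    rw [Polynomial.leadingCoeff, hwd, hw]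
    simp [Polynomial.coeff_one]
  have hPd : P.natDegree = 2 * m := by
    rw [hP, Polynomial.natDegree_comp, hVd, hwd]; ring
  have hPl : P.leadingCoeff = (-1 : ℝ) ^ m := by
    rw [hP, Polynomial.leadingCoeff_comp (by rw [hwd]; omega), hVd, hVl, hwl, ← mul_pow]
    norm_num
  have hPne : P ≠ 0 := by
    apply Polynomial.leadingCoeff_ne_zero.mp
    rw [hPl]
    exact pow_ne_zero m (by norm_num)
  -- factors of Q
  have hfactd : ∀ i : ℕ, (Polynomial.C (a i ^ 2) - (X:ℝ[X]) ^ 2).natDegree = 2 := by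
    intro i; compute_degree!
  have hfactl : ∀ i : ℕ, (Polynomial.C (a i ^ 2) - (X:ℝ[X]) ^ 2).leadingCoeff = -1 := by
    intro i
    rw [Polynomial.leadingCoeff, hfactd i, Polynomial.coeff_sub,
      Polynomial.coeff_C, Polynomial.coeff_X_pow]
    norm_num
  have hfne : ∀ i : ℕ, (Polynomial.C (a i ^ 2) - (X:ℝ[X]) ^ 2) ≠ 0 := fun i =>
    Polynomial.leadingCoeff_ne_zero.mp (by rw [hfactl i]; norm_num)
  have hIccCard : (Finset.Icc 1 m).card = m := by
    rw [Nat.card_Icc]; omega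
  have hQd : Q.natDegree = 2 * m := by
    rw [hQ, Polynomial.natDegree_prod _ _ (fun i _ => hfne i)]
    rw [Finset.sum_congr rfl (fun i _ => hfactd i), Finset.sum_const, hIccCard,
      smul_eq_mul]
    ring
  have hQl : Q.leadingCoeff = (-1:ℝ) ^ m := by
    rw [hQ, Polynomial.leadingCoeff_prod]
    rw [Finset.prod_congr rfl (fun i _ => hfactl i), Finset.prod_const, hIccCard]
  have hQne : Q ≠ 0 :=
    Polynomial.leadingCoeff_ne_zero.mp (by rw [hQl]; exact pow_ne_zero m (by norm_num))
  -- roots of P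
  have hProot : ∀ i ∈ Finset.Icc 1 m, ∀ y : ℝ, y ^ 2 = a i ^ 2 → P.eval y = 0 := by
    intro i hi y hy
    have h2θ : (0:ℝ) < 2 * θ i := by linarith [hθpos i hi]
    have h2θ' : 2 * θ i < π := by linarith [hθlt i hi]
    have hsin : Real.sin (2 * θ i) ≠ 0 := ne_of_gt (Real.sin_pos_of_pos_of_lt_pi h2θ h2θ')
    have hyval : (1:ℝ) - 2⁻¹ * y ^ 2 = Real.cos (2 * θ i) := by
      have h1 := Real.sin_sq_add_cos_sq (θ i)
      have h2 := Real.cos_two_mul (θ i)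
      have hay : a i ^ 2 = 4 * Real.sin (θ i) ^ 2 := by rw [ha]; ring
      rw [hy, hay]
      nlinarith [h1, h2]
    have hPy : P.eval y = V.eval (Real.cos (2 * θ i)) := by
      rw [hP, Polynomial.eval_comp]
      congr 1
      rw [hw]
      simp only [Polynomial.eval_sub, Polynomial.eval_one, Polynomial.eval_mul,
        Polynomial.eval_C, Polynomial.eval_pow, Polynomial.eval_X]
      linarith [hyval]
    have hU1 := Polynomial.Chebyshev.U_real_cos (2 * θ i) ((k:ℤ) - 1)
    have hU0 := Polynomial.Chebyshev.U_real_cos (2 * θ i) ((k:ℤ) - 2)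
    have hcos0 : Real.cos ((2*(k:ℝ)-1) * θ i) = 0 := by
      have h0 : (2*(k:ℝ)-1) ≠ 0 := ne_of_gt hkR
      have harg : (2*(k:ℝ)-1) * θ i = (i:ℝ) * π - π/2 := by
        show (2*(k:ℝ)-1) * (((i:ℝ) - 1/2) * π / (2*(k:ℝ)-1)) = (i:ℝ) * π - π/2
        rw [mul_comm, div_mul_cancel₀ _ h0]
        ring
      rw [harg, Real.cos_sub]
      simp [Real.sin_nat_mul_pi]
    have hmul : V.eval (Real.cos (2 * θ i)) * Real.sin (2 * θ i) = 0 := by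
      rw [hV, Polynomial.eval_sub, sub_mul, hU1, hU0]
      have e1 : ((((k:ℤ) - 1 : ℤ) : ℝ) + 1) * (2 * θ i) = ((2*(k:ℝ)-1) * θ i) + θ i := by
        push_cast; ring
      have e2 : ((((k:ℤ) - 2 : ℤ) : ℝ) + 1) * (2 * θ i) = ((2*(k:ℝ)-1) * θ i) - θ i := by
        push_cast; ring
      rw [e1, e2, Real.sin_add, Real.sin_sub, hcos0]
      ring
    rw [hPy]
    exact (mul_eq_zero.mp hmul).resolve_right hsin
  -- membership in s gives squares
  have hsq : ∀ y ∈ s, ∃ i ∈ Finset.Icc 1 m, y ^ 2 = a i ^ 2 := by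
    intro y hy
    rw [hs, Finset.mem_union] at hy
    rcases hy with hy | hy <;> simp only [Finset.mem_image] at hy <;>
      obtain ⟨i, hi, rfl⟩ := hy
    · exact ⟨i, hi, rfl⟩
    · exact ⟨i, hi, by ring⟩
  have hPzero : ∀ y ∈ s, P.eval y = 0 := by
    intro y hy
    obtain ⟨i, hi, hsq'⟩ := hsq y hy
    exact hProot i hi y hsq'
  have hQzero : ∀ y ∈ s, Q.eval y = 0 := by
    intro y hy
    obtain ⟨i, hi, hsq'⟩ := hsq y hy
    rw [hQ, Polynomial.eval_prod]
    apply Finset.prod_eq_zero hi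
    simp [hsq']
  -- the key polynomial identity
  have hkey : P = Q := by
    apply Polynomial.eq_of_degree_sub_lt_of_eval_finset_eq s
    · have hdlt : (P - Q).degree < P.degree :=
        Polynomial.degree_sub_lt
          (by rw [Polynomial.degree_eq_natDegree hPne, Polynomial.degree_eq_natDegree hQne,
                hPd, hQd])
          hPne (by rw [hPl, hQl])
      have : P.degree = ((2 * m : ℕ) : WithBot ℕ) := by
        rw [Polynomial.degree_eq_natDegree hPne, hPd]
      rw [this] at hdlt
      rw [hcard]
      exact_mod_cast hdlt
    · intro y hy
      rw [hPzero y hy, hQzero y hy]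
  -- conclude
  have hx := congrArg (Polynomial.eval x) hkey
  rw [hP, Polynomial.eval_comp, hQ, Polynomial.eval_prod] at hx
  have hwx : Polynomial.eval x w = 1 - x ^ 2 / 2 := by
    rw [hw]
    simp only [Polynomial.eval_sub, Polynomial.eval_one, Polynomial.eval_mul,
      Polynomial.eval_C, Polynomial.eval_pow, Polynomial.eval_X]
    ring
  rw [hwx] at hx
  rw [hV] at hx
  rw [hx]
  apply Finset.prod_congr rfl
  intro i hi
  simp only [Polynomial.eval_sub, Polynomial.eval_C, Polynomial.eval_pow, Polynomial.eval_X]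
  rw [ha]
  ring
end

section
/- For every k ≥ 2 and all real x, the derivative satisfies (x² − 4) · (d/dx)[V_{k-1}(1 − x²/2)] = 2x·(k·U_{k-2}(1 − x²/2) + (k−1)·U_{k-1}(1 − x²/2)). -/
open Polynomial Polynomial.Chebyshev Real

lemma V_deriv_poly (n : ℤ) :
    (1 + X) * Polynomial.derivative (Chebyshev.U ℝ (n - 1) - Chebyshev.U ℝ (n - 2)) =
      (n : ℝ[X]) * Chebyshev.U ℝ (n - 2) + ((n : ℝ[X]) - 1) * Chebyshev.U ℝ (n - 1) := by
  have hX : (1 - X : ℝ[X]) ≠ 0 := by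
    intro h
    have := congr_arg (Polynomial.eval 0) h
    simp at this
  apply mul_left_cancel₀ hX
  have h1 := add_one_mul_T_eq_poly_in_U (R := ℝ) (n - 1)
  have h2 := add_one_mul_T_eq_poly_in_U (R := ℝ) (n - 2)
  have h3 := T_eq_U_sub_X_mul_U ℝ n
  have h4 := T_eq_U_sub_X_mul_U ℝ (n - 1)
  have h5 := U_eq ℝ n
  have e1 : n - 1 + 1 = n := by ring
  have e2 : n - 2 + 1 = n - 1 := by ring
  have e3 : n - 1 - 1 = n - 2 := by ring
  rw [e1, h3, h5] at h1
  rw [e2, h4, e3] at h2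
  simp only [derivative_sub]
  push_cast at h1 h2 ⊢
  linear_combination (norm := ring_nf) h1 - h2

theorem V_comp_deriv (k : ℕ) (hk : 2 ≤ k) (x : ℝ) :
    (x ^ 2 - 4) *
        (Polynomial.derivative
            ((Chebyshev.U ℝ ((k : ℤ) - 1) - Chebyshev.U ℝ ((k : ℤ) - 2)).comp
              (1 - Polynomial.C (2⁻¹ : ℝ) * X ^ 2))).eval x =
      2 * x * ((k : ℝ) * (Chebyshev.U ℝ ((k : ℤ) - 2)).eval (1 - x ^ 2 / 2) +
        ((k : ℝ) - 1) * (Chebyshev.U ℝ ((k : ℤ) - 1)).eval (1 - x ^ 2 / 2)) := by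
  have key := congr_arg (Polynomial.eval (1 - x ^ 2 / 2)) (V_deriv_poly (k : ℤ))
  simp only [eval_mul, eval_add, eval_sub, eval_one, eval_X, eval_intCast, eval_natCast, Int.cast_natCast,
    derivative_sub] at key
  rw [derivative_comp]
  simp only [eval_mul, eval_comp, eval_sub, eval_one, eval_C, eval_X, eval_pow, eval_zero,
    eval_add, derivative_sub, derivative_one, derivative_mul, derivative_C, derivative_X_pow,
    eval_natCast, map_ofNat, eval_ofNat]
  norm_num
  have hy : 1 - 1 / 2 * x ^ 2 = 1 - x ^ 2 / 2 := by ring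
  rw [hy]

  linear_combination 2 * x * key
end

section
/- For every k ≥ 2, 1 ≤ i ≤ k−1, and x₀ = ±2 sin((i − 1/2)π/(2k−1)), one has x₀ · U_{k-2}(1 − x₀²/2) = ±(−1)^{i+1}. -/
/-!
Put `x₀ = 2ε sin θ` with `θ = (i - 1/2)π/(2k-1)`, so that `1 - x₀²/2 = cos 2θ`. Then
`U_{k-2}(cos 2θ) sin 2θ = sin((2k-2)θ) = sin((i - 1/2)π - θ) = (-1)^(i+1) cos θ`, and dividing by
`cos θ`, which is positive because `0 < θ < π/2` for `1 ≤ i ≤ k - 1`, gives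
`2 sin θ U_{k-2}(cos 2θ) = (-1)^(i+1)`.
-/

open Polynomial Polynomial.Chebyshev Real

theorem Real.sin_nat_sub_half_mul_pi_sub (i : ℕ) (θ : ℝ) :
    sin ((i - 1 / 2) * π - θ) = (-1) ^ (i + 1) * cos θ := by
  rw [show ((i : ℝ) - 1 / 2) * π - θ = i * π - (θ + π / 2) by ring, sin_nat_mul_pi_sub,
    sin_add_pi_div_two, pow_succ]
  ring

theorem Real.one_sub_sq_div_two_eq_cos_two_mul {ε : ℝ} (hε : ε ^ 2 = 1) (θ : ℝ) :
    1 - (ε * 2 * sin θ) ^ 2 / 2 = cos (2 * θ) := by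
  rw [cos_two_mul, ← sin_sq_add_cos_sq θ]
  linear_combination (-2 * sin θ ^ 2) * hε

namespace Polynomial.Chebyshev

theorem two_mul_sin_mul_U_real_cos_two_mul_mul_cos (n : ℤ) (θ : ℝ) :
    2 * sin θ * (U ℝ n).eval (cos (2 * θ)) * cos θ = sin ((n + 1) * (2 * θ)) := by
  rw [← U_real_cos, sin_two_mul]
  ring

theorem two_mul_sin_mul_U_real_cos_two_mul_of_odd_mul_eq {n : ℤ} {i : ℕ} {θ : ℝ}
    (hθ : (2 * n + 3) * θ = (i - 1 / 2) * π) (hcos : cos θ ≠ 0) :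
    2 * sin θ * (U ℝ n).eval (cos (2 * θ)) = (-1) ^ (i + 1) := by
  apply mul_right_cancel₀ hcos
  rw [two_mul_sin_mul_U_real_cos_two_mul_mul_cos, ← sin_nat_sub_half_mul_pi_sub, ← hθ]
  congr 1
  ring

end Polynomial.Chebyshev

theorem xU_at_roots_general (k : ℕ) (i : ℕ) (hi : i ∈ Finset.Icc 1 (k - 1))
    (ε : ℝ) (hε : ε = 1 ∨ ε = -1)
    (x₀ : ℝ) (hx₀ : x₀ = ε * 2 * Real.sin (((i : ℝ) - 1 / 2) * Real.pi / (2 * (k : ℝ) - 1))) :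
    x₀ * (Chebyshev.U ℝ ((k : ℤ) - 2)).eval (1 - x₀ ^ 2 / 2) = ε * (-1) ^ (i + 1) := by
  obtain ⟨hi1, hik⟩ : 1 ≤ (i : ℝ) ∧ (i : ℝ) + 1 ≤ k := by
    rw [Finset.mem_Icc] at hi
    exact ⟨by exact_mod_cast hi.1, by exact_mod_cast (by omega : i + 1 ≤ k)⟩
  set θ := ((i : ℝ) - 1 / 2) * π / (2 * (k : ℝ) - 1) with hθ_def
  have hθ : (2 * ((k : ℤ) - 2 : ℤ) + 3) * θ = (i - 1 / 2) * π := by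
    rw [hθ_def]
    push_cast
    field_simp [show (2 * (k : ℝ) - 1) ≠ 0 by linarith]
    ring
  have hθ_pos : 0 < θ := by
    apply div_pos (mul_pos (by linarith) pi_pos)
    linarith
  have hθ_lt : θ < π / 2 := by
    rw [div_lt_div_iff₀ (by linarith) two_pos]
    nlinarith [pi_pos]
  have hcos : cos θ ≠ 0 := (cos_pos_of_mem_Ioo ⟨by linarith, hθ_lt⟩).ne'
  have hε2 : ε ^ 2 = 1 := by rcases hε with rfl | rfl <;> norm_num
  rw [hx₀, one_sub_sq_div_two_eq_cos_two_mul hε2, mul_assoc ε, mul_assoc ε,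
    two_mul_sin_mul_U_real_cos_two_mul_of_odd_mul_eq hθ hcos]

theorem xU_at_roots (k : ℕ) (hk : 2 ≤ k) (i : ℕ) (hi : i ∈ Finset.Icc 1 (k - 1))
    (ε : ℝ) (hε : ε = 1 ∨ ε = -1)
    (x₀ : ℝ) (hx₀ : x₀ = ε * 2 * Real.sin (((i : ℝ) - 1 / 2) * Real.pi / (2 * (k : ℝ) - 1))) :
    x₀ * (Chebyshev.U ℝ ((k : ℤ) - 2)).eval (1 - x₀ ^ 2 / 2) = ε * (-1) ^ (i + 1) :=
  xU_at_roots_general k i hi ε hε x₀ hx₀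
end

section
/- For every n ≥ 2, the number of up-down words of length n over the alphabet {1,2,3} equals the Fibonacci number F_{n+2}. -/
/-- A word `w : Fin n → Fin k` is up-down if `w 0 < w 1 > w 2 < w 3 ⋯`. -/
def IsUpDown {n k : ℕ} (w : Fin n → Fin k) : Prop :=
  ∀ i : Fin n, ∀ h : i.1 + 1 < n,
    if i.1 % 2 = 0 then w i < w ⟨i.1 + 1, h⟩ else w ⟨i.1 + 1, h⟩ < w i

instance {n k : ℕ} : DecidablePred (IsUpDown (n := n) (k := k)) := fun w => by
  unfold IsUpDown; infer_instance

lemma snoc_mk_lt {n k : ℕ} (v : Fin (n+1) → Fin k) (x : Fin k) (j : ℕ)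
    (hj : j < n+1) (hj2 : j < n+2) :
    (Fin.snoc v x : Fin (n+2) → Fin k) ⟨j, hj2⟩ = v ⟨j, hj⟩ := by
  have : (⟨j, hj2⟩ : Fin (n+2)) = Fin.castSucc ⟨j, hj⟩ := rfl
  rw [this, Fin.snoc_castSucc]

lemma snoc_mk_last {n k : ℕ} (v : Fin (n+1) → Fin k) (x : Fin k) (j : ℕ)
    (hj : j = n+1) (hj2 : j < n+2) :
    (Fin.snoc v x : Fin (n+2) → Fin k) ⟨j, hj2⟩ = x := by
  have : (⟨j, hj2⟩ : Fin (n+2)) = Fin.last (n+1) := by apply Fin.ext; simpa using hj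
  rw [this, Fin.snoc_last]

lemma isUpDown_snoc {n : ℕ} {k : ℕ} (v : Fin (n+1) → Fin k) (x : Fin k) :
    IsUpDown (Fin.snoc v x) ↔ IsUpDown v ∧
      (if n % 2 = 0 then v (Fin.last n) < x else x < v (Fin.last n)) := by
  constructor
  · intro h
    refine ⟨?_, ?_⟩
    · rintro ⟨iv, hiv⟩ hi
      have h2 := h ⟨iv, by omega⟩ (by simp; omega)
      simpa [snoc_mk_lt v x iv hiv, snoc_mk_lt v x (iv+1) hi] using h2
    · have h2 := h ⟨n, by omega⟩ (by simp)
      have hl : (Fin.last n) = ⟨n, by omega⟩ := rfl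
      simpa [snoc_mk_lt v x n (by omega), snoc_mk_last v x (n+1) rfl, hl] using h2
  · rintro ⟨hv, hx⟩ ⟨iv, hiv⟩ hi
    simp only at hi
    rcases Nat.lt_or_ge (iv + 1) (n+1) with hlt | hge
    · have h2 := hv ⟨iv, by omega⟩ hlt
      simpa [snoc_mk_lt v x iv (by omega), snoc_mk_lt v x (iv+1) hlt] using h2
    · have hin : iv = n := by omega
      subst hin
      have hl : (Fin.last iv) = ⟨iv, by omega⟩ := rfl
      simpa [snoc_mk_lt v x iv (by omega), snoc_mk_last v x (iv+1) rfl, hl] using hx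

lemma nat_card_sigma {ι : Type*} [Fintype ι] (α : ι → Type*) [∀ i, Finite (α i)] :
    Nat.card (Σ i, α i) = ∑ i, Nat.card (α i) := by
  classical
  have : ∀ i, Fintype (α i) := fun i => Fintype.ofFinite _
  simp [Nat.card_eq_fintype_card]

lemma nat_card_fiber {α : Type*} [Finite α] (P : α → Prop) (f : α → Fin 3) :
    Nat.card {a // P a} = ∑ j : Fin 3, Nat.card {a // P a ∧ f a = j} := by
  rw [← nat_card_sigma]
  exact Nat.card_congr (((Equiv.sigmaCongrRight fun j =>
    (Equiv.subtypeSubtypeEquivSubtypeInter P (fun a => f a = j))).symm.trans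
    (Equiv.sigmaFiberEquiv (fun a : {a // P a} => f a.1))).symm)

noncomputable def cnt (n : ℕ) (j : Fin 3) : ℕ :=
  Nat.card {w : Fin (n+1) → Fin 3 // IsUpDown w ∧ w (Fin.last n) = j}

lemma cnt_zero (j : Fin 3) : cnt 0 j = 1 := by
  haveI : Unique {w : Fin 1 → Fin 3 // IsUpDown w ∧ w (Fin.last 0) = j} := by
    refine ⟨⟨⟨fun _ => j, fun i h => absurd h (by omega), rfl⟩⟩, ?_⟩
    rintro ⟨w, hw, hwj⟩
    apply Subtype.ext
    funext i
    have : i = Fin.last 0 := Subsingleton.elim _ _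
    rw [this]; exact hwj
  exact Nat.card_unique

lemma cnt_succ (n : ℕ) (j : Fin 3) :
    cnt (n+1) j = ∑ i : Fin 3,
      if (if n % 2 = 0 then i < j else j < i) then cnt n i else 0 := by
  have e : {v : Fin (n+1) → Fin 3 //
        IsUpDown v ∧ (if n % 2 = 0 then v (Fin.last n) < j else j < v (Fin.last n))} ≃
      {w : Fin (n+2) → Fin 3 // IsUpDown w ∧ w (Fin.last (n+1)) = j} :=
    { toFun := fun v => ⟨Fin.snoc v.1 j, (isUpDown_snoc _ _).mpr ⟨v.2.1, v.2.2⟩,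
        Fin.snoc_last _ _⟩
      invFun := fun w => ⟨Fin.init w.1, by
        have hw : w.1 = Fin.snoc (Fin.init w.1) j := by
          conv_lhs => rw [← Fin.snoc_init_self w.1]
          rw [w.2.2]
        have h2 := (isUpDown_snoc (Fin.init w.1) j).mp (hw ▸ w.2.1)
        exact ⟨h2.1, h2.2⟩⟩
      left_inv := fun v => Subtype.ext (by simp)
      right_inv := fun w => Subtype.ext (by
        show Fin.snoc (Fin.init w.1) j = w.1
        conv_rhs => rw [← Fin.snoc_init_self w.1]
        rw [w.2.2]) }
  have step : cnt (n+1) j = Nat.card {v : Fin (n+1) → Fin 3 //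
      IsUpDown v ∧ (if n % 2 = 0 then v (Fin.last n) < j else j < v (Fin.last n))} :=
    (Nat.card_congr e).symm
  rw [step, nat_card_fiber _ (fun v => v (Fin.last n))]
  apply Finset.sum_congr rfl
  intro i _
  by_cases hR : (if n % 2 = 0 then i < j else j < i)
  · rw [if_pos hR]
    apply Nat.card_congr
    apply Equiv.subtypeEquivRight
    intro v
    constructor
    · rintro ⟨⟨h1, _⟩, h3⟩; exact ⟨h1, h3⟩
    · rintro ⟨h1, h3⟩; exact ⟨⟨h1, h3 ▸ hR⟩, h3⟩
  · rw [if_neg hR]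
    have : IsEmpty {v : Fin (n+1) → Fin 3 //
        (IsUpDown v ∧ (if n % 2 = 0 then v (Fin.last n) < j else j < v (Fin.last n))) ∧
        v (Fin.last n) = i} := by
      constructor
      rintro ⟨v, ⟨_, h2⟩, h3⟩
      exact hR (h3 ▸ h2)
    exact Nat.card_of_isEmpty

lemma cnt_formula (n : ℕ) :
    cnt (n+1) 0 = (if n % 2 = 0 then 0 else Nat.fib (n+3)) ∧
    cnt (n+1) 1 = Nat.fib (n+2) ∧
    cnt (n+1) 2 = (if n % 2 = 0 then Nat.fib (n+3) else 0) := by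
  induction n with
  | zero =>
    refine ⟨?_, ?_, ?_⟩ <;>
      simp [cnt_succ, Fin.sum_univ_three, cnt_zero] <;> decide
  | succ n ih =>
    obtain ⟨h0, h1, h2⟩ := ih
    have hfib : Nat.fib (n+4) = Nat.fib (n+2) + Nat.fib (n+3) :=
      Nat.fib_add_two (n := n+2)
    rcases Nat.mod_two_eq_zero_or_one n with hp | hp
    · have hp1 : (n+1) % 2 = 1 := by omega
      refine ⟨?_, ?_, ?_⟩ <;>
        rw [cnt_succ, hp1] <;>
        simp [Fin.sum_univ_three, h0, h1, h2, hp, show (n+1)+3 = n+4 from rfl,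
          show (n+1)+2 = n+3 from rfl, hfib]
    · have hp1 : (n+1) % 2 = 0 := by omega
      refine ⟨?_, ?_, ?_⟩ <;>
        rw [cnt_succ, hp1] <;>
        simp [Fin.sum_univ_three, h0, h1, h2, hp, show (n+1)+3 = n+4 from rfl,
          show (n+1)+2 = n+3 from rfl, hfib] <;>
        omega

theorem updown_three (n : ℕ) (hn : 2 ≤ n) :
    Nat.card {w : Fin n → Fin 3 // IsUpDown w} = Nat.fib (n + 2) := by
  obtain ⟨m, rfl⟩ : ∃ m, n = m + 2 := ⟨n - 2, by omega⟩
  have h := nat_card_fiber (IsUpDown (n := m+2) (k := 3)) (fun w => w (Fin.last (m+1)))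
  rw [h]
  obtain ⟨h0, h1, h2⟩ := cnt_formula m
  have e0 : Nat.card {w : Fin (m+2) → Fin 3 // IsUpDown w ∧ w (Fin.last (m+1)) = 0}
      = cnt (m+1) 0 := rfl
  have e1 : Nat.card {w : Fin (m+2) → Fin 3 // IsUpDown w ∧ w (Fin.last (m+1)) = 1}
      = cnt (m+1) 1 := rfl
  have e2 : Nat.card {w : Fin (m+2) → Fin 3 // IsUpDown w ∧ w (Fin.last (m+1)) = 2}
      = cnt (m+1) 2 := rfl
  rw [Fin.sum_univ_three, e0, e1, e2, h0, h1, h2]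
  have hfib : Nat.fib (m+2) + Nat.fib (m+3) = Nat.fib (m+4) :=
    (Nat.fib_add_two (n := m+2)).symm
  rcases Nat.mod_two_eq_zero_or_one m with hp | hp
  · simp [hp]
    rw [show m + 2 + 2 = m + 4 from rfl]
    exact hfib
  · simp [hp]
    rw [show m + 2 + 2 = m + 4 from rfl]
    exact (Nat.add_comm _ _).trans hfib
end

section
/- For every k ≥ 1 and every n ≥ 2, the number of weakly up-down words of length n over the alphabet [k] equals the number of up-down words of length n over the alphabet [k+1]. -/
/-- A word `w : Fin n → Fin k` is weakly up-down if `w 0 ≤ w 1 ≥ w 2 ≤ w 3 ⋯`. -/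
def IsWeaklyUpDown {n k : ℕ} (w : Fin n → Fin k) : Prop :=
  ∀ i : Fin n, ∀ h : i.1 + 1 < n,
    if i.1 % 2 = 0 then w i ≤ w ⟨i.1 + 1, h⟩ else w ⟨i.1 + 1, h⟩ ≤ w i

private lemma updown_odd_pos {n k : ℕ} {v : Fin n → Fin (k + 1)}
    (hv : IsUpDown v) (i : Fin n) (ho : i.1 % 2 = 1) : 1 ≤ (v i).1 := by
  have hj1 : i.1 - 1 + 1 < n := by omega
  have h := hv ⟨i.1 - 1, by omega⟩ hj1
  rw [if_pos (by simp only []; omega)] at h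
  have hi : (⟨i.1 - 1 + 1, hj1⟩ : Fin n) = i := by ext; simp; omega
  rw [hi] at h
  have := Fin.lt_def.mp h
  omega

private lemma updown_even_lt {n k : ℕ} (hn : 2 ≤ n) {v : Fin n → Fin (k + 1)}
    (hv : IsUpDown v) (i : Fin n) (he : i.1 % 2 = 0) : (v i).1 < k := by
  by_cases h1 : i.1 + 1 < n
  · have h := hv i h1
    rw [if_pos he] at h
    have := Fin.lt_def.mp h
    have := (v ⟨i.1 + 1, h1⟩).2
    omega
  · -- i is the last index, so i.1 = n - 1 ≥ 1, and since i is even, i.1 ≥ 2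
    have hi1 : 1 ≤ i.1 := by have := i.2; omega
    have hj1 : i.1 - 1 + 1 < n := by omega
    have h := hv ⟨i.1 - 1, by omega⟩ hj1
    rw [if_neg (by simp only []; omega)] at h
    have hi : (⟨i.1 - 1 + 1, hj1⟩ : Fin n) = i := by ext; simp; omega
    rw [hi] at h
    have := Fin.lt_def.mp h
    have := (v ⟨i.1 - 1, by omega⟩ : Fin (k + 1)).2
    omega

theorem weakly_updown_eq_updown (k n : ℕ) (hk : 1 ≤ k) (hn : 2 ≤ n) :
    Nat.card {w : Fin n → Fin k // IsWeaklyUpDown w} =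
      Nat.card {w : Fin n → Fin (k + 1) // IsUpDown w} := by
  apply Nat.card_congr
  refine
    { toFun := fun w => ⟨fun i => ⟨(w.1 i).1 + i.1 % 2, by have := (w.1 i).2; omega⟩, ?_⟩
      invFun := fun v => ⟨fun i => ⟨(v.1 i).1 - i.1 % 2, ?_⟩, ?_⟩
      left_inv := ?_
      right_inv := ?_ }
  · -- f(w) is up-down
    intro i h
    have hw := w.2 i h
    by_cases he : i.1 % 2 = 0
    · rw [if_pos he] at hw ⊢
      have := Fin.le_def.mp hw
      simp only [Fin.lt_def]
      omega
    · rw [if_neg he] at hw ⊢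
      have := Fin.le_def.mp hw
      simp only [Fin.lt_def]
      omega
  · -- values of g(v) lie in Fin k
    by_cases he : i.1 % 2 = 0
    · have := updown_even_lt hn v.2 i he
      omega
    · have := (v.1 i).2
      omega
  · -- g(v) is weakly up-down
    intro i h
    have hv := v.2 i h
    by_cases he : i.1 % 2 = 0
    · rw [if_pos he] at hv ⊢
      have := Fin.lt_def.mp hv
      simp only [Fin.le_def]
      omega
    · rw [if_neg he] at hv ⊢
      have := Fin.lt_def.mp hv
      simp only [Fin.le_def]
      omega
  · intro w
    ext i
    simp
  · intro v
    ext i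
    simp only []
    by_cases he : i.1 % 2 = 0
    · simp [he]
    · have ho : i.1 % 2 = 1 := by omega
      have := updown_odd_pos v.2 i ho
      simp only [ho]
      omega
end

section
/- For every n ≥ 1, the number of cyclic up-down words of length 2n over the alphabet {1,2,3} equals the Lucas number L_{2n}. -/
/-- A word of even length is cyclic up-down if it is up-down and its last
letter is greater than its first letter. -/
def IsCyclicUpDown {n k : ℕ} (w : Fin n → Fin k) : Prop :=
  IsUpDown w ∧ ∀ h : 0 < n, w ⟨0, h⟩ < w ⟨n - 1, Nat.sub_lt h one_pos⟩

/-- The Lucas numbers: `L 0 = 2`, `L 1 = 1`, `L (m+2) = L (m+1) + L m`. -/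
def lucas : ℕ → ℕ
  | 0 => 2
  | 1 => 1
  | m + 2 => lucas (m + 1) + lucas m

abbrev St : Type := {p : Fin 3 × Fin 3 // p.1 < p.2}

def Adj (s s' : St) : Prop := s'.1.1 < s.1.2

instance : DecidableRel Adj := fun _ _ => inferInstanceAs (Decidable (_ < _))

def W : ℕ → St → St → ℕ
  | 0, s, s' => if s = s' then 1 else 0
  | m+1, s, s' => ∑ u : St, if Adj u s' then W m s u else 0

def PathProp (m : ℕ) (s s' : St) (f : Fin (m+1) → St) : Prop :=
  (∀ t : Fin m, Adj (f t.castSucc) (f t.succ)) ∧ f 0 = s ∧ f (Fin.last m) = s'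

instance (m s s') : DecidablePred (PathProp m s s') := fun f => by
  unfold PathProp; infer_instance

lemma castSucc_succ_comm {m : ℕ} (j : Fin m) :
    (j.castSucc).succ = (j.succ).castSucc := by
  apply Fin.ext; simp [Fin.val_succ]

lemma pathProp_snoc {m : ℕ} {s s' u : St} (h : Adj u s') {g : Fin (m+1) → St}
    (hg : PathProp m s u g) : PathProp (m+1) s s' (Fin.snoc g s') := by
  refine ⟨?_, ?_, ?_⟩
  · intro t
    induction t using Fin.lastCases with
    | last =>
      rw [Fin.succ_last, Fin.snoc_last, Fin.snoc_castSucc, hg.2.2]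
      exact h
    | cast j =>
      rw [castSucc_succ_comm, Fin.snoc_castSucc, Fin.snoc_castSucc]
      exact hg.1 j
  · rw [show (0 : Fin (m+2)) = ((0 : Fin (m+1)).castSucc) from rfl, Fin.snoc_castSucc]
    exact hg.2.1
  · rw [Fin.snoc_last]

lemma pathProp_init {m : ℕ} {s s' : St} {f : Fin (m+2) → St}
    (hf : PathProp (m+1) s s' f) :
    PathProp m s (f (Fin.last m).castSucc) (fun t => f t.castSucc) := by
  refine ⟨?_, ?_, rfl⟩
  · intro t
    have := hf.1 t.castSucc
    rwa [castSucc_succ_comm] at this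
  · exact hf.2.1

lemma snoc_fiber {m : ℕ} {s u : St} (s' : St) (g : {f // PathProp m s u f}) :
    (Fin.snoc g.1 s' : Fin (m+2) → St) (Fin.last m).castSucc = u := by
  rw [Fin.snoc_castSucc]; exact g.2.2.2

lemma card_path (m : ℕ) (s s' : St) :
    Fintype.card {f // PathProp m s s' f} = W m s s' := by
  induction m generalizing s' with
  | zero =>
    by_cases h : s = s'
    · subst h
      rw [show W 0 s s = 1 from if_pos rfl]
      rw [Fintype.card_eq_one_iff]
      refine ⟨⟨fun _ => s, fun t => t.elim0, rfl, rfl⟩, ?_⟩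
      rintro ⟨f, hf⟩
      apply Subtype.ext
      funext t
      have ht : t = 0 := Fin.fin_one_eq_zero t
      subst ht
      exact hf.2.1
    · rw [show W 0 s s' = 0 from if_neg h, Fintype.card_eq_zero_iff]
      constructor
      rintro ⟨f, hf⟩
      exact h ((hf.2.1.symm.trans (by rw [show (0 : Fin 1) = Fin.last 0 from rfl, hf.2.2])))
  | succ m ih =>
    have key : Fintype.card {f // PathProp (m+1) s s' f}
        = ∑ u : St, Fintype.card {p : {f // PathProp (m+1) s s' f} //
            p.1 (Fin.last m).castSucc = u} := by
      rw [← Fintype.card_sigma]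
      exact Fintype.card_congr (Equiv.sigmaFiberEquiv _).symm
    rw [key, show W (m+1) s s' = ∑ u : St, if Adj u s' then W m s u else 0 from rfl]
    apply Finset.sum_congr rfl
    intro u _
    by_cases h : Adj u s'
    · rw [if_pos h, ← ih u]
      apply Fintype.card_congr
      refine
        { toFun := fun p => ⟨fun t => p.1.1 t.castSucc, by
            have hp : p.1.1 (Fin.last m).castSucc = u := p.2
            have := pathProp_init p.1.2
            rwa [hp] at this⟩
          invFun := fun g => ⟨⟨Fin.snoc g.1 s', pathProp_snoc h g.2⟩, snoc_fiber s' g⟩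
          left_inv := ?_
          right_inv := ?_ }
      · rintro ⟨⟨f, hf⟩, hp⟩
        apply Subtype.ext
        apply Subtype.ext
        funext t
        show (Fin.snoc (fun t => f t.castSucc) s' : Fin (m+2) → St) t = f t
        induction t using Fin.lastCases with
        | last => rw [Fin.snoc_last]; exact hf.2.2.symm
        | cast j => rw [Fin.snoc_castSucc]
      · rintro ⟨g, hg⟩
        apply Subtype.ext
        funext t
        show (Fin.snoc g s' : Fin (m+2) → St) t.castSucc = g t
        rw [Fin.snoc_castSucc]
    · rw [if_neg h, Fintype.card_eq_zero_iff]
      constructor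
      rintro ⟨⟨f, hf⟩, hp⟩
      apply h
      have hp' : f (Fin.last m).castSucc = u := hp
      have := hf.1 (Fin.last m)
      rwa [Fin.succ_last, hp', hf.2.2] at this

def CycProp (n : ℕ) (f : Fin (n+1) → St) : Prop :=
  (∀ t : Fin n, Adj (f t.castSucc) (f t.succ)) ∧ f (Fin.last n) = f 0

instance (n) : DecidablePred (CycProp n) := fun f => by
  unfold CycProp; infer_instance

lemma card_cyc (n : ℕ) :
    Fintype.card {f // CycProp n f} = ∑ s : St, W n s s := by
  have key : Fintype.card {f // CycProp n f}
      = ∑ s : St, Fintype.card {p : {f // CycProp n f} // p.1 0 = s} := by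
    rw [← Fintype.card_sigma]
    exact Fintype.card_congr (Equiv.sigmaFiberEquiv _).symm
  rw [key]
  apply Finset.sum_congr rfl
  intro s _
  rw [← card_path n s s]
  apply Fintype.card_congr
  refine
    { toFun := fun p => ⟨p.1.1, p.1.2.1, p.2, by
        have h0 : p.1.1 0 = s := p.2
        rw [p.1.2.2, h0]⟩
      invFun := fun g => ⟨⟨g.1, g.2.1, g.2.2.2.trans g.2.2.1.symm⟩, g.2.2.1⟩
      left_inv := fun p => by apply Subtype.ext; apply Subtype.ext; rfl
      right_inv := fun g => by apply Subtype.ext; rfl }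

def trc (n : ℕ) : ℕ := ∑ s : St, W n s s

lemma W_rec (m : ℕ) : ∀ s s' : St, W (m+3) s s' + W (m+1) s s' = 3 * W (m+2) s s' := by
  induction m with
  | zero => decide
  | succ m ih =>
    intro s s'
    show (∑ u : St, if Adj u s' then W (m+3) s u else 0)
        + (∑ u : St, if Adj u s' then W (m+1) s u else 0)
        = 3 * ∑ u : St, if Adj u s' then W (m+2) s u else 0
    rw [← Finset.sum_add_distrib, Finset.mul_sum]
    apply Finset.sum_congr rfl
    intro u _
    by_cases h : Adj u s'
    · rw [if_pos h, if_pos h, if_pos h, ih s u]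
    · simp [if_neg h]

lemma trc_rec (m : ℕ) : trc (m+3) + trc (m+1) = 3 * trc (m+2) := by
  unfold trc
  rw [← Finset.sum_add_distrib, Finset.mul_sum]
  exact Finset.sum_congr rfl fun s _ => W_rec m s s

lemma lucas_rec (m : ℕ) : lucas (2*m+6) + lucas (2*m+2) = 3 * lucas (2*m+4) := by
  have h1 : lucas (2*m+6) = lucas (2*m+5) + lucas (2*m+4) := by
    show lucas ((2*m+4)+2) = _; rw [lucas]
  have h2 : lucas (2*m+5) = lucas (2*m+4) + lucas (2*m+3) := by
    show lucas ((2*m+3)+2) = _; rw [lucas]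
  have h3 : lucas (2*m+4) = lucas (2*m+3) + lucas (2*m+2) := by
    show lucas ((2*m+2)+2) = _; rw [lucas]
  omega

lemma trc_eq_lucas (m : ℕ) : trc (m+1) = lucas (2*(m+1)) := by
  induction m using Nat.strong_induction_on with
  | _ m ih =>
    match m with
    | 0 => show trc 1 = lucas 2; decide
    | 1 => show trc 2 = lucas 4; decide
    | (k+2) =>
      have h1 := ih k (by omega)
      have h2 := ih (k+1) (by omega)
      have h3 := trc_rec k
      have h4 := lucas_rec k
      have e1 : 2*(k+1) = 2*k+2 := by ring
      have e2 : 2*(k+2) = 2*k+4 := by ring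
      have e3 : 2*(k+3) = 2*k+6 := by ring
      rw [e1] at h1
      rw [e2] at h2
      have h2' : trc (k+2) = lucas (2*k+4) := h2
      have goal' : trc (k+3) + trc (k+1) = 3 * trc (k+2) := h3
      show trc (k+3) = lucas (2*(k+3))
      rw [e3]
      omega

lemma wcast {N : ℕ} (w : Fin N → Fin 3) {a b : ℕ} (ha : a < N) (hb : b < N) (h : a = b) :
    w ⟨a, ha⟩ = w ⟨b, hb⟩ := by cases h; rfl

def toWord (n : ℕ) (f : Fin (n+1) → St) : Fin (2*n) → Fin 3 :=
  fun i => if i.1 % 2 = 0 then (f ⟨i.1/2, by have := i.2; omega⟩).1.1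
           else (f ⟨i.1/2, by have := i.2; omega⟩).1.2

def toCyc (n : ℕ) (hn : 1 ≤ n) (w : Fin (2*n) → Fin 3) (hw : IsCyclicUpDown w) :
    Fin (n+1) → St :=
  fun t => ⟨(w ⟨2*(t.1 % n), by have := Nat.mod_lt t.1 hn; omega⟩,
             w ⟨2*(t.1 % n)+1, by have := Nat.mod_lt t.1 hn; omega⟩), by
    have hm : t.1 % n < n := Nat.mod_lt t.1 hn
    have h := hw.1 ⟨2*(t.1 % n), by omega⟩ (show 2*(t.1 % n) + 1 < 2*n by omega)
    rw [if_pos (Nat.mul_mod_right 2 _)] at h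
    exact h⟩

lemma toCyc_cycProp (n : ℕ) (hn : 1 ≤ n) (w : Fin (2*n) → Fin 3)
    (hw : IsCyclicUpDown w) : CycProp n (toCyc n hn w hw) := by
  constructor
  · intro t
    have ht : t.1 < n := t.2
    have hmt : t.1 % n = t.1 := Nat.mod_eq_of_lt ht
    show (toCyc n hn w hw t.succ).1.1 < (toCyc n hn w hw t.castSucc).1.2
    show w ⟨2*((t.1+1) % n), _⟩ < w ⟨2*(t.1 % n)+1, _⟩
    by_cases h1 : t.1 + 1 < n
    · have hm1 : (t.1+1) % n = t.1+1 := Nat.mod_eq_of_lt h1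
      have key := hw.1 ⟨2*t.1+1, by omega⟩ (show 2*t.1+1+1 < 2*n by omega)
      rw [if_neg (by omega : ¬ (2*t.1+1) % 2 = 0)] at key
      rw [wcast w _ (by omega) (by omega : 2*((t.1+1) % n) = 2*t.1+1+1),
          wcast w _ (by omega) (by rw [hmt] : 2*(t.1 % n)+1 = 2*t.1+1)]
      exact key
    · have h2 : t.1 + 1 = n := by omega
      have hm1 : (t.1+1) % n = 0 := by rw [h2, Nat.mod_self]
      have key := hw.2 (by omega)
      rw [wcast w _ (by omega) (by omega : 2*((t.1+1) % n) = 0),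
          wcast w _ (by omega) (by omega : 2*(t.1 % n)+1 = 2*n-1)]
      exact key
  · apply Subtype.ext
    apply Prod.ext
    · show w _ = w _
      exact wcast w _ _ (by simp [Nat.mod_self])
    · show w _ = w _
      exact wcast w _ _ (by simp [Nat.mod_self])

lemma toWord_cyclic (n : ℕ) (hn : 1 ≤ n) (f : Fin (n+1) → St) (hf : CycProp n f) :
    IsCyclicUpDown (toWord n f) := by
  constructor
  · intro i h
    have hi : i.1 + 1 < 2*n := h
    by_cases hpar : i.1 % 2 = 0
    · rw [if_pos hpar]
      show toWord n f i < toWord n f ⟨i.1+1, h⟩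
      unfold toWord
      rw [if_pos hpar, if_neg (by omega : ¬ (i.1+1) % 2 = 0)]
      have e : (⟨(i.1+1)/2, by omega⟩ : Fin (n+1)) = ⟨i.1/2, by omega⟩ :=
        Fin.ext (by simp only []; omega)
      rw [e]
      exact (f ⟨i.1/2, by omega⟩).2
    · rw [if_neg hpar]
      show toWord n f ⟨i.1+1, h⟩ < toWord n f i
      unfold toWord
      rw [if_pos (by omega : (i.1+1) % 2 = 0), if_neg hpar]
      have hlt : i.1/2 < n := by omega
      have key := hf.1 ⟨i.1/2, hlt⟩
      have e1 : (Fin.castSucc ⟨i.1/2, hlt⟩ : Fin (n+1)) = ⟨i.1/2, by omega⟩ :=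
        Fin.ext (by simp)
      have e2 : (Fin.succ ⟨i.1/2, hlt⟩ : Fin (n+1)) = ⟨(i.1+1)/2, by omega⟩ :=
        Fin.ext (by simp only [Fin.val_succ]; omega)
      rw [e1, e2] at key
      exact key
  · intro hpos
    show toWord n f ⟨0, hpos⟩ < toWord n f ⟨2*n-1, _⟩
    unfold toWord
    rw [if_pos (by omega : (0:ℕ) % 2 = 0), if_neg (by omega : ¬ (2*n-1) % 2 = 0)]
    have hlt : n - 1 < n := by omega
    have key := hf.1 ⟨n-1, hlt⟩
    have e1 : (Fin.castSucc ⟨n-1, hlt⟩ : Fin (n+1)) = ⟨(2*n-1)/2, by omega⟩ :=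
      Fin.ext (by simp only [Fin.coe_castSucc]; omega)
    have e2 : (Fin.succ ⟨n-1, hlt⟩ : Fin (n+1)) = Fin.last n :=
      Fin.ext (by simp only [Fin.val_succ, Fin.val_last]; omega)
    rw [e1, e2, hf.2] at key
    have e3 : (0 : Fin (n+1)) = ⟨(0:ℕ)/2, by omega⟩ := Fin.ext (by simp)
    rw [e3] at key
    exact key

def wordEquiv (n : ℕ) (hn : 1 ≤ n) :
    {w : Fin (2*n) → Fin 3 // IsCyclicUpDown w} ≃ {f // CycProp n f} where
  toFun p := ⟨toCyc n hn p.1 p.2, toCyc_cycProp n hn p.1 p.2⟩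
  invFun g := ⟨toWord n g.1, toWord_cyclic n hn g.1 g.2⟩
  left_inv p := by
    apply Subtype.ext
    funext i
    have hi : i.1 < 2*n := i.2
    show toWord n (toCyc n hn p.1 p.2) i = p.1 i
    unfold toWord
    by_cases hpar : i.1 % 2 = 0
    · rw [if_pos hpar]
      have hm : (i.1/2) % n = i.1/2 := Nat.mod_eq_of_lt (by omega)
      exact congrArg p.1 (Fin.ext (show 2*((i.1/2) % n) = i.1 by omega))
    · rw [if_neg hpar]
      have hm : (i.1/2) % n = i.1/2 := Nat.mod_eq_of_lt (by omega)
      exact congrArg p.1 (Fin.ext (show 2*((i.1/2) % n) + 1 = i.1 by omega))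
  right_inv g := by
    apply Subtype.ext
    funext t
    have hmlt : t.1 % n < n := Nat.mod_lt t.1 hn
    have harg : g.1 ⟨t.1 % n, by omega⟩ = g.1 t := by
      by_cases hlt : t.1 < n
      · exact congrArg g.1 (Fin.ext (show t.1 % n = t.1 from Nat.mod_eq_of_lt hlt))
      · have ht : t.1 = n := by have := t.2; omega
        have hm0 : t.1 % n = 0 := by rw [ht, Nat.mod_self]
        have e0 : (⟨t.1 % n, by omega⟩ : Fin (n+1)) = 0 := Fin.ext (by simp [hm0])
        have et : t = Fin.last n := Fin.ext (by simp [ht])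
        rw [e0, et]
        exact g.2.2.symm
    apply Subtype.ext
    apply Prod.ext
    · show toWord n g.1 ⟨2*(t.1 % n), by omega⟩ = (g.1 t).1.1
      unfold toWord
      rw [if_pos (Nat.mul_mod_right 2 _)]
      refine Eq.trans ?_ (congrArg (fun s => s.1.1) harg)
      exact congrArg (fun s => s.1.1) (congrArg g.1
        (show (⟨2*(t.1 % n)/2, by omega⟩ : Fin (n+1)) = ⟨t.1 % n, by omega⟩ from
          Fin.ext (by show 2*(t.1 % n)/2 = t.1 % n; omega)))
    · show toWord n g.1 ⟨2*(t.1 % n)+1, by omega⟩ = (g.1 t).1.2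
      unfold toWord
      rw [if_neg (by omega : ¬ (2*(t.1 % n)+1) % 2 = 0)]
      refine Eq.trans ?_ (congrArg (fun s => s.1.2) harg)
      exact congrArg (fun s => s.1.2) (congrArg g.1
        (show (⟨(2*(t.1 % n)+1)/2, by omega⟩ : Fin (n+1)) = ⟨t.1 % n, by omega⟩ from
          Fin.ext (by show (2*(t.1 % n)+1)/2 = t.1 % n; omega)))

theorem cyclic_updown_three (n : ℕ) (hn : 1 ≤ n) :
    Nat.card {w : Fin (2 * n) → Fin 3 // IsCyclicUpDown w} = lucas (2 * n) := by
  obtain ⟨m, rfl⟩ : ∃ m, n = m + 1 := ⟨n - 1, by omega⟩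
  rw [Nat.card_congr (wordEquiv (m+1) hn), Nat.card_eq_fintype_card, card_cyc]
  exact trc_eq_lucas m
end
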